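/- arXiv:2308.02428 — 2 statements merged into one kernel-verified Lean document; each statement's English description precedes it below -/
import Mathlib

section
/- Let f : [0,∞) → ℝ be twice continuously differentiable. Assume that for every natural number j the functions x ↦ e^{−x} x^j f(x), x ↦ e^{−x} x^j f'(x), and x ↦ e^{−x} x^j f''(x) are integrable on (0,∞), and that for every natural number j, e^{−x} x^j f(x) → 0 and e^{−x} x^j f'(x) → 0 as x → ∞. Then for every n ∈ ℕ, ∫_0^∞ e^{−x} L_n(x) f''(x) dx = Σ_{k=0}^{n} (k+1)·c_{n−k}(f) − (n+1)·f(0) − f'(0). -/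
open Real MeasureTheory Filter Set Finset

/-- Laguerre polynomial (order zero) of degree `n`. -/
noncomputable def lag0 (n : ℕ) (x : ℝ) : ℝ :=
  ∑ k ∈ Finset.range (n + 1),
    (-1 : ℝ) ^ k * (n.factorial : ℝ) / (((n - k).factorial : ℝ) * ((k.factorial : ℝ)) ^ 2) * x ^ k

/-- `n`-th (order zero) Laguerre coefficient of a function `f`. -/
noncomputable def lagC0 (n : ℕ) (f : ℝ → ℝ) : ℝ :=
  ∫ x in Set.Ioi (0 : ℝ), Real.exp (-x) * lag0 n x * f x

/-- The `k`-th coefficient of the Laguerre polynomial of degree `n`. -/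
noncomputable def lagA (n k : ℕ) : ℝ :=
  (-1 : ℝ) ^ k * (n.factorial : ℝ) / (((n - k).factorial : ℝ) * ((k.factorial : ℝ)) ^ 2)

lemma lag0_eq (n : ℕ) (x : ℝ) : lag0 n x = ∑ k ∈ Finset.range (n+1), lagA n k * x ^ k := rfl

lemma lag0_zero (n : ℕ) : lag0 n 0 = 1 := by
  rw [lag0_eq, Finset.sum_eq_single 0]
  · simp [lagA, Nat.factorial_ne_zero]
  · intro k _ hk; simp [zero_pow hk]
  · simp

lemma coeffB (n : ℕ) : lagA (n+1) (n+1) * ((n:ℝ)+1) = - lagA n n := by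
  simp only [lagA, Nat.sub_self, Nat.factorial_zero, Nat.factorial_succ, pow_succ]
  have h : ((n.factorial : ℝ)) ≠ 0 := Nat.cast_ne_zero.2 n.factorial_ne_zero
  push_cast
  field_simp

lemma coeffA (n j : ℕ) (h : j < n) :
    lagA (n+1) (j+1) * ((j:ℝ)+1) = lagA n (j+1) * ((j:ℝ)+1) - lagA n j := by
  obtain ⟨m, rfl⟩ : ∃ m, n = j + 1 + m := ⟨n - (j+1), by omega⟩
  have e1 : j + 1 + m + 1 - (j + 1) = m + 1 := by omega
  have e2 : j + 1 + m - (j + 1) = m := by omega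
  have e3 : j + 1 + m - j = m + 1 := by omega
  simp only [lagA, e1, e2, e3, Nat.factorial_succ]
  have h1 : ((j.factorial : ℝ)) ≠ 0 := Nat.cast_ne_zero.2 j.factorial_ne_zero
  have h2 : ((m.factorial : ℝ)) ≠ 0 := Nat.cast_ne_zero.2 m.factorial_ne_zero
  have h3 : (((j+1+m).factorial : ℝ)) ≠ 0 := Nat.cast_ne_zero.2 (j+1+m).factorial_ne_zero
  push_cast
  field_simp
  ring

lemma dlag_eq (n : ℕ) (x : ℝ) :
    ∑ k ∈ Finset.range (n+1), lagA n k * ((k:ℝ) * x^(k-1)) = - ∑ k ∈ Finset.range n, lag0 k x := by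
  induction n with
  | zero => simp
  | succ n ih =>
    have L : ∑ k ∈ Finset.range (n+2), lagA (n+1) k * ((k:ℝ) * x^(k-1))
        = ∑ j ∈ Finset.range (n+1), lagA (n+1) (j+1) * ((j:ℝ)+1) * x^j := by
      rw [Finset.sum_range_succ' (fun k => lagA (n+1) k * ((k:ℝ) * x^(k-1))) (n+1)]
      simp only [Nat.cast_zero, zero_mul, mul_zero, add_zero]
      refine Finset.sum_congr rfl fun j _ => ?_
      have : j + 1 - 1 = j := rfl
      rw [this]; push_cast; ring
    have L' : ∑ k ∈ Finset.range (n+1), lagA n k * ((k:ℝ) * x^(k-1))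
        = ∑ j ∈ Finset.range n, lagA n (j+1) * ((j:ℝ)+1) * x^j := by
      rw [Finset.sum_range_succ' (fun k => lagA n k * ((k:ℝ) * x^(k-1))) n]
      simp only [Nat.cast_zero, zero_mul, mul_zero, add_zero]
      refine Finset.sum_congr rfl fun j _ => ?_
      have : j + 1 - 1 = j := rfl
      rw [this]; push_cast; ring
    rw [L, Finset.sum_range_succ (fun k => lag0 k x) n,
        Finset.sum_range_succ (fun j => lagA (n+1) (j+1) * ((j:ℝ)+1) * x^j) n]
    have key : ∑ j ∈ Finset.range n, lagA (n+1) (j+1) * ((j:ℝ)+1) * x^j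
        = ∑ j ∈ Finset.range n, (lagA n (j+1) * ((j:ℝ)+1) * x^j - lagA n j * x ^ j) := by
      refine Finset.sum_congr rfl fun j hj => ?_
      rw [show lagA (n+1) (j+1) * ((j:ℝ)+1) * x^j
          = (lagA (n+1) (j+1) * ((j:ℝ)+1)) * x^j by ring,
        coeffA n j (Finset.mem_range.1 hj)]
      ring
    rw [key, Finset.sum_sub_distrib, show lagA (n+1) (n+1) * ((n:ℝ)+1) * x^n
        = (lagA (n+1) (n+1) * ((n:ℝ)+1)) * x^n by ring, coeffB n, ← L']
    rw [lag0_eq n x, Finset.sum_range_succ (fun k => lagA n k * x ^ k) n]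
    linear_combination ih

lemma hasDerivAt_lag0 (n : ℕ) (x : ℝ) :
    HasDerivAt (lag0 n) (- ∑ k ∈ Finset.range n, lag0 k x) x := by
  rw [← dlag_eq]
  have : HasDerivAt (fun y => ∑ k ∈ Finset.range (n+1), lagA n k * y ^ k)
      (∑ k ∈ Finset.range (n+1), lagA n k * ((k:ℝ) * x^(k-1))) x := by
    apply HasDerivAt.fun_sum
    intro k _
    exact (hasDerivAt_pow k x).const_mul _
  exact this.congr_of_eventuallyEq (by filter_upwards with y; rw [lag0_eq])

lemma lag0_expand (g : ℝ → ℝ) (n : ℕ) :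
    (fun x : ℝ => Real.exp (-x) * lag0 n x * g x)
      = fun x => ∑ k ∈ Finset.range (n+1), lagA n k * (Real.exp (-x) * x ^ k * g x) := by
  funext x
  rw [lag0_eq, Finset.mul_sum, Finset.sum_mul]
  exact Finset.sum_congr rfl fun k _ => by ring

lemma integrable_mul_lag0 (g : ℝ → ℝ)
    (h : ∀ j : ℕ, IntegrableOn (fun x : ℝ => Real.exp (-x) * x ^ j * g x) (Set.Ioi 0)) (n : ℕ) :
    IntegrableOn (fun x : ℝ => Real.exp (-x) * lag0 n x * g x) (Set.Ioi 0) := by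
  rw [lag0_expand]
  exact integrable_finset_sum _ fun k _ => (h k).const_mul _

lemma tendsto_mul_lag0 (g : ℝ → ℝ)
    (h : ∀ j : ℕ, Tendsto (fun x : ℝ => Real.exp (-x) * x ^ j * g x) atTop (nhds 0)) (n : ℕ) :
    Tendsto (fun x : ℝ => Real.exp (-x) * lag0 n x * g x) atTop (nhds 0) := by
  rw [lag0_expand]
  have := tendsto_finset_sum (Finset.range (n+1))
    (fun k (_ : k ∈ Finset.range (n+1)) => ((h k).const_mul (lagA n k)))
  simpa using this

lemma continuous_exp_lag0 (n : ℕ) : Continuous (fun x : ℝ => Real.exp (-x) * lag0 n x) := by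
  apply (Real.continuous_exp.comp continuous_neg).mul
  have : Continuous fun x : ℝ => ∑ k ∈ Finset.range (n+1), lagA n k * x ^ k :=
    continuous_finset_sum _ fun k _ => continuous_const.mul (continuous_pow k)
  simpa [← lag0_eq] using this

lemma ibp (g g' : ℝ → ℝ)
    (hg : ∀ x ∈ Set.Ici (0:ℝ), HasDerivWithinAt g (g' x) (Set.Ici 0) x)
    (hint : ∀ j : ℕ, IntegrableOn (fun x : ℝ => Real.exp (-x) * x ^ j * g x) (Set.Ioi 0))
    (hint' : ∀ j : ℕ, IntegrableOn (fun x : ℝ => Real.exp (-x) * x ^ j * g' x) (Set.Ioi 0))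
    (hlim : ∀ j : ℕ, Tendsto (fun x : ℝ => Real.exp (-x) * x ^ j * g x) atTop (nhds 0))
    (n : ℕ) :
    (∫ x in Set.Ioi (0:ℝ), Real.exp (-x) * lag0 n x * g' x)
      = - g 0 + ∑ k ∈ Finset.range (n+1), lagC0 k g := by
  set F := fun x : ℝ => Real.exp (-x) * lag0 n x * g x with hFdef
  set F' := fun x : ℝ => Real.exp (-x) * lag0 n x * g' x
    - Real.exp (-x) * (∑ k ∈ Finset.range (n+1), lag0 k x) * g x with hF'def
  have hF : ∀ x ∈ Set.Ioi (0:ℝ), HasDerivAt F (F' x) x := by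
    intro x hx
    have hgx : HasDerivAt g (g' x) x :=
      (hg x (Set.mem_Ici.2 (le_of_lt (Set.mem_Ioi.1 hx)))).hasDerivAt (Ici_mem_nhds hx)
    have h1 : HasDerivAt (fun y : ℝ => Real.exp (-y)) (-Real.exp (-x)) x := by
      simpa using (hasDerivAt_neg x).exp
    have h2 := hasDerivAt_lag0 n x
    have h3 := (h1.fun_mul h2).fun_mul hgx
    refine h3.congr_deriv ?_
    rw [hF'def]
    simp only
    rw [Finset.sum_range_succ]
    ring
  have hFcont : ContinuousWithinAt F (Set.Ici 0) 0 :=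
    ((continuous_exp_lag0 n).continuousWithinAt).mul (hg 0 Set.self_mem_Ici).continuousWithinAt
  have hFlim : Tendsto F atTop (nhds 0) := tendsto_mul_lag0 g hlim n
  have hint1 : IntegrableOn (fun x : ℝ => Real.exp (-x) * lag0 n x * g' x) (Set.Ioi 0) :=
    integrable_mul_lag0 g' hint' n
  have hsum : (fun x : ℝ => Real.exp (-x) * (∑ k ∈ Finset.range (n+1), lag0 k x) * g x)
      = fun x => ∑ k ∈ Finset.range (n+1), Real.exp (-x) * lag0 k x * g x := by
    funext x; rw [Finset.mul_sum, Finset.sum_mul]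
  have hint2 : IntegrableOn
      (fun x : ℝ => Real.exp (-x) * (∑ k ∈ Finset.range (n+1), lag0 k x) * g x) (Set.Ioi 0) := by
    rw [hsum]
    exact integrable_finset_sum _ fun k _ => integrable_mul_lag0 g hint k
  have hFint : IntegrableOn F' (Set.Ioi 0) := hint1.sub hint2
  have key := integral_Ioi_of_hasDerivAt_of_tendsto hFcont hF hFint hFlim
  have hF0 : F 0 = g 0 := by simp [hFdef, lag0_zero]
  rw [hF'def] at key
  rw [integral_sub hint1 hint2, hF0] at key
  have hB : (∫ x in Set.Ioi (0:ℝ),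
      Real.exp (-x) * (∑ k ∈ Finset.range (n+1), lag0 k x) * g x)
      = ∑ k ∈ Finset.range (n+1), lagC0 k g := by
    rw [hsum, integral_finset_sum _ fun k _ => integrable_mul_lag0 g hint k]
    rfl
  rw [hB] at key
  linarith [key]

lemma tri (c : ℕ → ℝ) (n : ℕ) :
    ∑ k ∈ Finset.range (n+1), ∑ j ∈ Finset.range (k+1), c j
      = ∑ j ∈ Finset.range (n+1), ((n:ℝ) + 1 - j) * c j := by
  induction n with
  | zero => simp
  | succ n ih =>
    rw [Finset.sum_range_succ (fun k => ∑ j ∈ Finset.range (k+1), c j) (n+1), ih]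
    have h2 : ∀ x ∈ Finset.range (n+2), ((((n+1):ℕ):ℝ) + 1 - (x:ℝ)) * c x
        = ((n:ℝ) + 1 - x) * c x + c x := by
      intro x _; push_cast; ring
    rw [Finset.sum_congr rfl h2, Finset.sum_add_distrib,
      Finset.sum_range_succ (fun j => ((n:ℝ) + 1 - j) * c j) (n+1)]
    push_cast
    ring

lemma reflect (c : ℕ → ℝ) (n : ℕ) :
    ∑ k ∈ Finset.range (n+1), ((k:ℝ)+1) * c (n - k)
      = ∑ j ∈ Finset.range (n+1), ((n:ℝ)+1-j) * c j := by
  rw [← Finset.sum_range_reflect (fun j => ((n:ℝ)+1-j) * c j) (n+1)]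
  refine Finset.sum_congr rfl fun k hk => ?_
  have hk' : k ≤ n := by have := Finset.mem_range.1 hk; omega
  have h1 : n + 1 - 1 - k = n - k := by omega
  rw [h1]
  have h2 : ((n - k : ℕ) : ℝ) = (n:ℝ) - k := by
    rw [Nat.cast_sub hk']
  rw [h2]
  ring

theorem laguerre_transform_of_second_deriv
    (f f' f'' : ℝ → ℝ)
    (hderiv : ∀ x ∈ Set.Ici (0 : ℝ), HasDerivWithinAt f (f' x) (Set.Ici 0) x)
    (hderiv' : ∀ x ∈ Set.Ici (0 : ℝ), HasDerivWithinAt f' (f'' x) (Set.Ici 0) x)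
    (hcont : ContinuousOn f'' (Set.Ici 0))
    (hint_f : ∀ j : ℕ, IntegrableOn (fun x : ℝ => Real.exp (-x) * x ^ j * f x) (Set.Ioi 0))
    (hint_f' : ∀ j : ℕ, IntegrableOn (fun x : ℝ => Real.exp (-x) * x ^ j * f' x) (Set.Ioi 0))
    (hint_f'' : ∀ j : ℕ, IntegrableOn (fun x : ℝ => Real.exp (-x) * x ^ j * f'' x) (Set.Ioi 0))
    (hlim_f : ∀ j : ℕ, Tendsto (fun x : ℝ => Real.exp (-x) * x ^ j * f x) atTop (nhds 0))
    (hlim_f' : ∀ j : ℕ, Tendsto (fun x : ℝ => Real.exp (-x) * x ^ j * f' x) atTop (nhds 0)) :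
    ∀ n : ℕ, (∫ x in Set.Ioi (0 : ℝ), Real.exp (-x) * lag0 n x * f'' x) =
      (∑ k ∈ Finset.range (n + 1), ((k : ℝ) + 1) * lagC0 (n - k) f) -
        ((n : ℝ) + 1) * f 0 - f' 0 := by
  intro n
  have h1 := ibp f' f'' hderiv' hint_f' hint_f'' hlim_f' n
  have h2 : ∀ k, lagC0 k f' = - f 0 + ∑ j ∈ Finset.range (k+1), lagC0 j f := by
    intro k
    have := ibp f f' hderiv hint_f hint_f' hlim_f k
    simpa [lagC0] using this
  rw [h1, Finset.sum_congr rfl fun k _ => h2 k, Finset.sum_add_distrib,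
    tri (fun j => lagC0 j f) n, ← reflect (fun j => lagC0 j f) n]
  simp only [Finset.sum_const, Finset.card_range, nsmul_eq_mul]
  push_cast
  ring
end

section
/- Let ν > −1 be real. For all n, m ∈ ℕ, ∫_0^∞ e^{−x} x^ν L_n^ν(x) L_m^ν(x) dx = Γ(n+ν+1)/n! if n = m, and 0 if n ≠ m. -/
open Real MeasureTheory Filter Set Finset

/-- Generalized Laguerre polynomial of order `ν` and degree `n`. -/
noncomputable def lagP (ν : ℝ) (n : ℕ) (x : ℝ) : ℝ :=
  ∑ m ∈ Finset.range (n + 1),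
    Real.Gamma ((n : ℝ) + ν + 1) /
      (Real.Gamma ((m : ℝ) + ν + 1) * ((n - m).factorial : ℝ) * (m.factorial : ℝ)) *
      (-x) ^ m

/-- `n`-th Laguerre coefficient of order `ν` of a function `f`. -/
noncomputable def lagC (ν : ℝ) (n : ℕ) (f : ℝ → ℝ) : ℝ :=
  ∫ x in Set.Ioi (0 : ℝ), Real.exp (-x) * x ^ ν * lagP ν n x * f x

/-- Pascal step for alternating binomial sums. -/
lemma pascal_step (F : ℕ → ℝ) (m : ℕ) :
    ∑ k ∈ Finset.range (m + 2), (-1 : ℝ) ^ k * ((m + 1).choose k) * F k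
      = -∑ k ∈ Finset.range (m + 1), (-1 : ℝ) ^ k * (m.choose k) * (F (k + 1) - F k) := by
  have h1 : ∑ k ∈ Finset.range (m + 2), (-1 : ℝ) ^ k * ((m + 1).choose k) * F k
      = (∑ k ∈ Finset.range (m + 1), (-1 : ℝ) ^ (k+1) * ((m + 1).choose (k+1)) * F (k+1))
        + F 0 := by
    rw [Finset.sum_range_succ' (fun k => (-1 : ℝ) ^ k * ((m + 1).choose k) * F k) (m+1)]
    simp
  have h2 : ∀ k, ((m + 1).choose (k+1) : ℝ) = (m.choose k : ℝ) + (m.choose (k+1) : ℝ) := by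
    intro k; rw [Nat.choose_succ_succ]; push_cast; ring
  have h3 : ∑ k ∈ Finset.range (m + 1), (-1 : ℝ) ^ (k+1) * (m.choose (k+1)) * F (k+1)
      = ∑ k ∈ Finset.range (m + 1), (-1 : ℝ) ^ k * (m.choose k) * F k - F 0 := by
    rw [eq_sub_iff_add_eq]
    have := Finset.sum_range_succ' (fun k => (-1 : ℝ) ^ k * (m.choose k) * F k) (m+1)
    rw [Finset.sum_range_succ (fun k => (-1 : ℝ) ^ k * (m.choose k) * F k) (m+1)] at this
    simp only [Nat.choose_succ_self, Nat.cast_zero, mul_zero, zero_mul, add_zero,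
      pow_zero, one_mul, Nat.choose_zero_right, Nat.cast_one, mul_one] at this
    linarith [this]
  calc ∑ k ∈ Finset.range (m + 2), (-1 : ℝ) ^ k * ((m + 1).choose k) * F k
      = (∑ k ∈ Finset.range (m + 1), ((-1 : ℝ) ^ (k+1) * (m.choose k) * F (k+1)
          + (-1 : ℝ) ^ (k+1) * (m.choose (k+1)) * F (k+1))) + F 0 := by
        rw [h1]; congr 1; apply Finset.sum_congr rfl; intro k _; rw [h2]; ring
    _ = (∑ k ∈ Finset.range (m + 1), (-1 : ℝ) ^ (k+1) * (m.choose k) * F (k+1))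
          + (∑ k ∈ Finset.range (m + 1), (-1 : ℝ) ^ (k+1) * (m.choose (k+1)) * F (k+1)) + F 0 := by
        rw [Finset.sum_add_distrib]
    _ = -∑ k ∈ Finset.range (m + 1), (-1 : ℝ) ^ k * (m.choose k) * (F (k + 1) - F k) := by
        rw [h3]
        have e : ∀ k : ℕ, -((-1 : ℝ) ^ k * (m.choose k) * (F (k + 1) - F k))
            = (-1 : ℝ) ^ k * (m.choose k) * F k - (-1 : ℝ) ^ k * (m.choose k) * F (k+1) := by
          intro k; ring
        rw [← Finset.sum_neg_distrib]
        simp_rw [e]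
        rw [Finset.sum_sub_distrib]
        have e2 : ∑ k ∈ Finset.range (m + 1), (-1 : ℝ) ^ (k+1) * (m.choose k) * F (k+1)
            = -∑ k ∈ Finset.range (m + 1), (-1 : ℝ) ^ k * (m.choose k) * F (k+1) := by
          rw [← Finset.sum_neg_distrib]; apply Finset.sum_congr rfl; intro k _; ring
        rw [e2]; ring

noncomputable def lagD (ν : ℝ) (s m : ℕ) : ℝ :=
  ∑ k ∈ Finset.range (m + 1), (-1 : ℝ) ^ k * (m.choose k) *
    ∏ i ∈ Finset.range s, (ν + k + 1 + i)

lemma prod_diff (a : ℝ) (s : ℕ) :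
    (∏ i ∈ Finset.range (s + 1), (a + 1 + i)) - ∏ i ∈ Finset.range (s + 1), (a + i)
      = (s + 1 : ℝ) * ∏ i ∈ Finset.range s, (a + 1 + i) := by
  have h1 : ∏ i ∈ Finset.range (s + 1), (a + i)
      = a * ∏ i ∈ Finset.range s, (a + 1 + i) := by
    rw [Finset.prod_range_succ' (fun i => a + i) s]
    simp only [Nat.cast_zero, add_zero]
    rw [mul_comm]
    congr 1
    apply Finset.prod_congr rfl; intro i _; push_cast; ring
  have h2 : ∏ i ∈ Finset.range (s + 1), (a + 1 + i)
      = (∏ i ∈ Finset.range s, (a + 1 + i)) * (a + 1 + s) := Finset.prod_range_succ _ s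
  rw [h1, h2]; ring

lemma lagD_zero : ∀ m : ℕ, ∀ ν : ℝ, ∀ s : ℕ, s < m → lagD ν s m = 0 := by
  intro m
  induction m with
  | zero => intro ν s hs; omega
  | succ m ih =>
    intro ν s hs
    unfold lagD
    rw [show m + 1 + 1 = m + 2 from rfl, pascal_step]
    cases s with
    | zero => simp
    | succ t =>
      have e : ∀ k ∈ Finset.range (m + 1),
          (-1 : ℝ) ^ k * (m.choose k) *
            ((∏ i ∈ Finset.range (t + 1), (ν + ((k : ℕ) + 1 : ℕ) + 1 + i))
              - ∏ i ∈ Finset.range (t + 1), (ν + k + 1 + i))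
          = (t + 1 : ℝ) * ((-1 : ℝ) ^ k * (m.choose k) *
              ∏ i ∈ Finset.range t, ((ν + 1) + k + 1 + i)) := by
        intro k _
        have hd := prod_diff (ν + k + 1) t
        have c1 : ∀ i : ℕ, ν + ((k : ℕ) + 1 : ℕ) + 1 + (i : ℝ) = ν + k + 1 + 1 + i := by
          intro i; push_cast; ring
        have c2 : ∀ i : ℕ, (ν + 1) + k + 1 + (i : ℝ) = ν + k + 1 + 1 + i := by
          intro i; ring
        simp_rw [c1, c2]
        rw [hd]; ring
      rw [Finset.sum_congr rfl e, ← Finset.mul_sum]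
      have := ih (ν + 1) t (by omega)
      unfold lagD at this
      rw [this]; ring

lemma lagD_diag : ∀ m : ℕ, ∀ ν : ℝ, lagD ν m m = (-1 : ℝ) ^ m * (m.factorial : ℝ) := by
  intro m
  induction m with
  | zero => intro ν; unfold lagD; simp
  | succ m ih =>
    intro ν
    unfold lagD
    rw [show m + 1 + 1 = m + 2 from rfl, pascal_step]
    have e : ∀ k ∈ Finset.range (m + 1),
        (-1 : ℝ) ^ k * (m.choose k) *
          ((∏ i ∈ Finset.range (m + 1), (ν + ((k : ℕ) + 1 : ℕ) + 1 + i))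
            - ∏ i ∈ Finset.range (m + 1), (ν + k + 1 + i))
        = (m + 1 : ℝ) * ((-1 : ℝ) ^ k * (m.choose k) *
            ∏ i ∈ Finset.range m, ((ν + 1) + k + 1 + i)) := by
      intro k _
      have hd := prod_diff (ν + k + 1) m
      have c1 : ∀ i : ℕ, ν + ((k : ℕ) + 1 : ℕ) + 1 + (i : ℝ) = ν + k + 1 + 1 + i := by
        intro i; push_cast; ring
      have c2 : ∀ i : ℕ, (ν + 1) + k + 1 + (i : ℝ) = ν + k + 1 + 1 + i := by
        intro i; ring
      simp_rw [c1, c2]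
      rw [hd]; ring
    rw [Finset.sum_congr rfl e, ← Finset.mul_sum]
    have := ih (ν + 1)
    unfold lagD at this
    rw [this, Nat.factorial_succ]
    push_cast
    ring

lemma Gamma_add_nat_prod (a : ℝ) (ha : 0 < a) : ∀ s : ℕ,
    Real.Gamma (a + s) = Real.Gamma a * ∏ i ∈ Finset.range s, (a + i) := by
  intro s
  induction s with
  | zero => simp
  | succ s ih =>
    have hs : (0 : ℝ) < a + s := by positivity
    rw [show a + ((s + 1 : ℕ) : ℝ) = (a + s) + 1 by push_cast; ring,
      Real.Gamma_add_one (ne_of_gt hs), ih, Finset.prod_range_succ]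
    ring

lemma integrableOn_exp_rpow {p : ℝ} (hp : -1 < p) :
    MeasureTheory.IntegrableOn (fun x : ℝ => Real.exp (-x) * x ^ p) (Set.Ioi 0) := by
  have h := Real.GammaIntegral_convergent (s := p + 1) (by linarith)
  simpa using h

lemma integral_exp_rpow {p : ℝ} (hp : -1 < p) :
    ∫ x in Set.Ioi (0 : ℝ), Real.exp (-x) * x ^ p = Real.Gamma (p + 1) := by
  rw [Real.Gamma_eq_integral (by linarith : (0 : ℝ) < p + 1)]
  norm_num

lemma laguerre_key (ν : ℝ) (hν : -1 < ν) (n m : ℕ) (hnm : n ≤ m) :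
    (∫ x in Set.Ioi (0 : ℝ), Real.exp (-x) * x ^ ν * lagP ν n x * lagP ν m x) =
      if n = m then Real.Gamma ((n : ℝ) + ν + 1) / (n.factorial : ℝ) else 0 := by
  set a : ℕ → ℝ := fun j => Real.Gamma ((n : ℝ) + ν + 1) /
      (Real.Gamma ((j : ℝ) + ν + 1) * ((n - j).factorial : ℝ) * (j.factorial : ℝ)) with ha
  set b : ℕ → ℝ := fun k => Real.Gamma ((m : ℝ) + ν + 1) /
      (Real.Gamma ((k : ℝ) + ν + 1) * ((m - k).factorial : ℝ) * (k.factorial : ℝ)) with hb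
  have hΓ : ∀ k : ℕ, 0 < Real.Gamma ((k : ℝ) + ν + 1) := by
    intro k
    apply Real.Gamma_pos_of_pos
    have : (0 : ℝ) ≤ k := Nat.cast_nonneg k
    linarith
  have hp : ∀ j k : ℕ, -1 < ν + (j : ℝ) + (k : ℝ) := by
    intro j k
    have h1 : (0 : ℝ) ≤ j := Nat.cast_nonneg j
    have h2 : (0 : ℝ) ≤ k := Nat.cast_nonneg k
    linarith
  have hpt : ∀ x ∈ Set.Ioi (0 : ℝ),
      Real.exp (-x) * x ^ ν * lagP ν n x * lagP ν m x
        = ∑ j ∈ Finset.range (n + 1), ∑ k ∈ Finset.range (m + 1),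
            (a j * b k * (-1 : ℝ) ^ (j + k)) * (Real.exp (-x) * x ^ (ν + j + k)) := by
    intro x hx
    have hx0 : (0 : ℝ) < x := hx
    unfold lagP
    rw [mul_assoc, Finset.sum_mul_sum, Finset.mul_sum]
    apply Finset.sum_congr rfl
    intro j _
    rw [Finset.mul_sum]
    apply Finset.sum_congr rfl
    intro k _
    have hx1 : x ^ (ν + (j : ℝ) + (k : ℝ)) = x ^ ν * x ^ j * x ^ k := by
      rw [Real.rpow_add hx0, Real.rpow_add hx0, Real.rpow_natCast, Real.rpow_natCast]
    rw [hx1, neg_pow x j, neg_pow x k, pow_add]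
    ring
  have hint : ∀ j k : ℕ, MeasureTheory.IntegrableOn
      (fun x => (a j * b k * (-1 : ℝ) ^ (j + k)) * (Real.exp (-x) * x ^ (ν + j + k)))
      (Set.Ioi 0) :=
    fun j k => (integrableOn_exp_rpow (hp j k)).const_mul _
  rw [MeasureTheory.setIntegral_congr_fun measurableSet_Ioi hpt,
    MeasureTheory.integral_finset_sum _
      (fun j _ => MeasureTheory.integrable_finset_sum _ (fun k _ => hint j k))]
  have hjint : ∀ j ∈ Finset.range (n + 1),
      (∫ x in Set.Ioi (0 : ℝ), ∑ k ∈ Finset.range (m + 1),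
          (a j * b k * (-1 : ℝ) ^ (j + k)) * (Real.exp (-x) * x ^ (ν + j + k)))
        = ∑ k ∈ Finset.range (m + 1),
            (a j * b k * (-1 : ℝ) ^ (j + k)) * Real.Gamma (ν + j + k + 1) := by
    intro j _
    rw [MeasureTheory.integral_finset_sum _ (fun k _ => hint j k)]
    apply Finset.sum_congr rfl
    intro k _
    rw [MeasureTheory.integral_const_mul, integral_exp_rpow (hp j k)]
  rw [Finset.sum_congr rfl hjint]
  have hterm : ∀ j ∈ Finset.range (n + 1), ∀ k ∈ Finset.range (m + 1),
      (a j * b k * (-1 : ℝ) ^ (j + k)) * Real.Gamma (ν + j + k + 1)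
        = (a j * (-1 : ℝ) ^ j * Real.Gamma ((m : ℝ) + ν + 1) / (m.factorial : ℝ)) *
            ((-1 : ℝ) ^ k * (m.choose k : ℝ) * ∏ i ∈ Finset.range j, (ν + k + 1 + i)) := by
    intro j _ k hk
    have hkm : k ≤ m := Nat.lt_succ_iff.mp (Finset.mem_range.mp hk)
    have hg : Real.Gamma (ν + (j : ℝ) + (k : ℝ) + 1)
        = Real.Gamma (ν + (k : ℝ) + 1) * ∏ i ∈ Finset.range j, (ν + k + 1 + i) := by
      have h := Gamma_add_nat_prod (ν + (k : ℝ) + 1)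
        (by have : (0 : ℝ) ≤ k := Nat.cast_nonneg k; linarith) j
      rw [show ν + (j : ℝ) + (k : ℝ) + 1 = (ν + (k : ℝ) + 1) + (j : ℕ) by push_cast; ring, h]
    rw [hg]
    have hΓeq : Real.Gamma (ν + (k : ℝ) + 1) = Real.Gamma ((k : ℝ) + ν + 1) := by
      rw [show ν + (k : ℝ) + 1 = (k : ℝ) + ν + 1 by ring]
    have hb' : b k * Real.Gamma ((k : ℝ) + ν + 1)
        = Real.Gamma ((m : ℝ) + ν + 1) * (m.choose k : ℝ) / (m.factorial : ℝ) := by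
      rw [hb]
      have h1 : Real.Gamma ((k : ℝ) + ν + 1) ≠ 0 := ne_of_gt (hΓ k)
      have h2 : ((m - k).factorial : ℝ) ≠ 0 := Nat.cast_ne_zero.mpr (Nat.factorial_ne_zero _)
      have h3 : ((k).factorial : ℝ) ≠ 0 := Nat.cast_ne_zero.mpr (Nat.factorial_ne_zero _)
      have h4 : ((m).factorial : ℝ) ≠ 0 := Nat.cast_ne_zero.mpr (Nat.factorial_ne_zero _)
      have hfac : ((m.choose k : ℕ) : ℝ) * (k.factorial : ℝ) * ((m - k).factorial : ℝ)
          = (m.factorial : ℝ) := by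
        exact_mod_cast congrArg (Nat.cast (R := ℝ)) (Nat.choose_mul_factorial_mul_factorial hkm)
      have hC : ((m.choose k : ℕ) : ℝ) ≠ 0 :=
        Nat.cast_ne_zero.mpr (Nat.choose_pos hkm).ne'
      rw [← hfac]
      field_simp
    calc (a j * b k * (-1 : ℝ) ^ (j + k)) *
          (Real.Gamma (ν + (k : ℝ) + 1) * ∏ i ∈ Finset.range j, (ν + k + 1 + i))
        = (a j * (-1 : ℝ) ^ (j + k) * ∏ i ∈ Finset.range j, (ν + k + 1 + i)) *
            (b k * Real.Gamma ((k : ℝ) + ν + 1)) := by rw [hΓeq]; ring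
      _ = _ := by rw [hb', pow_add]; ring
  have hsum : ∀ j ∈ Finset.range (n + 1),
      ∑ k ∈ Finset.range (m + 1),
          (a j * b k * (-1 : ℝ) ^ (j + k)) * Real.Gamma (ν + j + k + 1)
        = (a j * (-1 : ℝ) ^ j * Real.Gamma ((m : ℝ) + ν + 1) / (m.factorial : ℝ)) *
            lagD ν j m := by
    intro j hj
    rw [Finset.sum_congr rfl (hterm j hj), ← Finset.mul_sum]
    rfl
  rw [Finset.sum_congr rfl hsum]
  by_cases hnm2 : n = m
  · subst hnm2
    rw [if_pos rfl, Finset.sum_range_succ, Finset.sum_eq_zero, zero_add, lagD_diag]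
    · have hΓn : Real.Gamma ((n : ℝ) + ν + 1) ≠ 0 := ne_of_gt (hΓ n)
      have hfn : ((n).factorial : ℝ) ≠ 0 := Nat.cast_ne_zero.mpr (Nat.factorial_ne_zero _)
      rw [ha]
      simp only [Nat.sub_self, Nat.factorial_zero, Nat.cast_one, mul_one]
      have hneg : (-1 : ℝ) ^ (n * 2) = 1 := Even.neg_one_pow ⟨n, by omega⟩
      field_simp
      linear_combination hneg
    · intro j hj
      have hjm : j < n := Finset.mem_range.mp hj
      rw [lagD_zero n ν j hjm, mul_zero]
  · rw [if_neg hnm2]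
    have hlt : n < m := lt_of_le_of_ne hnm hnm2
    apply Finset.sum_eq_zero
    intro j hj
    have hjm : j < m := lt_of_lt_of_le (Finset.mem_range.mp hj) hlt
    rw [lagD_zero m ν j hjm, mul_zero]

theorem laguerre_orthogonality
    (ν : ℝ) (hν : -1 < ν) (n m : ℕ) :
    (∫ x in Set.Ioi (0 : ℝ), Real.exp (-x) * x ^ ν * lagP ν n x * lagP ν m x) =
      if n = m then Real.Gamma ((n : ℝ) + ν + 1) / (n.factorial : ℝ) else 0 := by
  rcases le_or_gt n m with h | h
  · exact laguerre_key ν hν n m h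
  · have hsym : (∫ x in Set.Ioi (0 : ℝ), Real.exp (-x) * x ^ ν * lagP ν n x * lagP ν m x)
        = ∫ x in Set.Ioi (0 : ℝ), Real.exp (-x) * x ^ ν * lagP ν m x * lagP ν n x := by
      apply MeasureTheory.setIntegral_congr_fun measurableSet_Ioi
      intro x _
      ring
    rw [hsym, laguerre_key ν hν m n (le_of_lt h), if_neg (by omega : ¬ m = n),
      if_neg (by omega : ¬ n = m)]
end
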